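/- Let T be a bounded operator on a Hilbert space H, k ≥ 1, and x₀ ∈ H. For a polynomial p = ∑ pₙzⁿ define Lp = ∑_{n≥1} pₙ z^{n-1} and the norm ‖|p‖|²_k = ∑ₙ|pₙ|² + ∑_{n≥0} ‖(L^{nk}p)(T)x₀‖². Then for every polynomial p and every j ∈ ℕ, ‖|z^{kj}p‖|²_k = ‖|p‖|²_k + ∑_{i=1}^{j} ‖T^{ki}p(T)x₀‖². -/

import Mathlib

open scoped BigOperators
open Polynomial

/-- The squared norm `‖|p‖|²_k = ∑ₙ |pₙ|² + ∑_{n≥0} ‖(L^{nk} p)(T) x₀‖²`, where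
`L` is the coefficient backward shift `Lp(z) = (p(z) - p(0))/z` (i.e. `Polynomial.divX`).
All series have only finitely many nonzero terms, so we use `tsum`. -/
noncomputable def polyNormSq {H : Type*} [NormedAddCommGroup H] [InnerProductSpace ℂ H]
    [CompleteSpace H] (k : ℕ) (T : H →L[ℂ] H) (x₀ : H) (p : Polynomial ℂ) : ℝ :=
  (∑' n : ℕ, ‖p.coeff n‖ ^ 2) +
    ∑' n : ℕ, ‖(Polynomial.aeval T (Polynomial.divX^[n * k] p)) x₀‖ ^ 2

/-! It suffices to treat `j = 1` and induct. Multiplying by `z^k` shifts the coefficients,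
which leaves `∑ₙ |pₙ|²` unchanged, while `L^k (z^k q) = q` shifts the second series by one
index, prepending the single new term `‖T^k q(T) x₀‖²`. -/

namespace Polynomial

variable {R : Type*} [Semiring R]

theorem coeff_iterate_divX (m n : ℕ) (p : R[X]) : (divX^[m] p).coeff n = p.coeff (n + m) := by
  induction m generalizing n with
  | zero => rfl
  | succ m ih => rw [Function.iterate_succ_apply', coeff_divX, ih, add_right_comm, add_assoc]

theorem iterate_divX_X_pow_mul (m : ℕ) (p : R[X]) : divX^[m] (X ^ m * p) = p := by
  ext n
  rw [coeff_iterate_divX, coeff_X_pow_mul', if_pos (by omega), Nat.add_sub_cancel]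

theorem iterate_divX_eq_zero_of_natDegree_lt {m : ℕ} {p : R[X]} (h : p.natDegree < m) :
    divX^[m] p = 0 := by
  ext n
  rw [coeff_iterate_divX, coeff_zero]
  exact coeff_eq_zero_of_natDegree_lt (by omega)

theorem tsum_comp_coeff_X_pow_mul {α : Type*} [AddCommMonoid α] [TopologicalSpace α]
    (f : R → α) (hf : f 0 = 0) (m : ℕ) (p : R[X]) :
    ∑' n, f ((X ^ m * p).coeff n) = ∑' n, f (p.coeff n) := by
  have hsupp : Function.support (fun n => f ((X ^ m * p).coeff n)) ⊆ Set.range (· + m) := by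
    intro n hn
    have hmn : m ≤ n := by
      by_contra hlt
      exact hn (by simp only [coeff_X_pow_mul', if_neg hlt, hf])
    exact ⟨n - m, Nat.sub_add_cancel hmn⟩
  rw [← (add_left_injective m).tsum_eq hsupp]
  simp only [coeff_X_pow_mul]

theorem summable_comp_iterate_divX {α : Type*} [AddCommMonoid α] [TopologicalSpace α]
    (f : R[X] → α) (hf : f 0 = 0) {k : ℕ} (hk : 1 ≤ k) (p : R[X]) :
    Summable fun n : ℕ => f (divX^[n * k] p) := by
  refine summable_of_ne_finset_zero (s := Finset.range (p.natDegree + 1)) fun n hn => ?_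
  have hdeg : p.natDegree < n * k := by
    rw [Finset.mem_range, not_lt] at hn
    nlinarith
  rw [iterate_divX_eq_zero_of_natDegree_lt hdeg, hf]

end Polynomial

theorem aeval_X_pow_mul_apply {𝕜 H : Type*} [NontriviallyNormedField 𝕜] [NormedAddCommGroup H]
    [NormedSpace 𝕜 H] (T : H →L[𝕜] H) (x₀ : H) (m : ℕ) (p : 𝕜[X]) :
    aeval T (X ^ m * p) x₀ = (T ^ m) (aeval T p x₀) := by
  rw [map_mul, aeval_X_pow]
  rfl

theorem polyNormSq_X_pow_mul {H : Type*} [NormedAddCommGroup H] [InnerProductSpace ℂ H]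
    [CompleteSpace H] (T : H →L[ℂ] H) (x₀ : H) {k : ℕ} (hk : 1 ≤ k) (q : ℂ[X]) :
    polyNormSq k T x₀ (X ^ k * q) = polyNormSq k T x₀ q + ‖(T ^ k) (aeval T q x₀)‖ ^ 2 := by
  have hshift : ∀ n : ℕ, divX^[(n + 1) * k] (X ^ k * q) = divX^[n * k] q := fun n => by
    rw [add_one_mul, Function.iterate_add_apply, iterate_divX_X_pow_mul]
  unfold polyNormSq
  have hsum := summable_comp_iterate_divX (fun r => ‖aeval T r x₀‖ ^ 2) (by simp) hk (X ^ k * q)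
  rw [tsum_comp_coeff_X_pow_mul (fun a : ℂ => ‖a‖ ^ 2) (by simp), hsum.tsum_eq_zero_add,
    zero_mul, Function.iterate_zero_apply, aeval_X_pow_mul_apply]
  simp only [hshift]
  ring

theorem stmt18 {H : Type*} [NormedAddCommGroup H] [InnerProductSpace ℂ H] [CompleteSpace H]
    (k : ℕ) (hk : 1 ≤ k) (T : H →L[ℂ] H) (x₀ : H) (p : Polynomial ℂ) (j : ℕ) :
    polyNormSq k T x₀ (Polynomial.X ^ (k * j) * p) =
      polyNormSq k T x₀ p +
        ∑ i ∈ Finset.Icc 1 j, ‖(T ^ (k * i)) ((Polynomial.aeval T p) x₀)‖ ^ 2 := by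
  induction j with
  | zero => simp
  | succ j ih =>
    rw [mul_add_one, pow_add, mul_comm (X ^ (k * j)), mul_assoc, polyNormSq_X_pow_mul T x₀ hk,
      ih, aeval_X_pow_mul_apply, ← mul_apply_eq_comp, ← pow_add,
      Finset.sum_Icc_succ_top (by omega), mul_add_one, add_comm k, add_assoc]
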